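/- Let ω₁, ω₂ be complex numbers that are linearly independent over ℝ (equivalently, ω₂/ω₁ is not real). Let f, g : ℂ → ℂ be functions that are meromorphic on all of ℂ and doubly periodic with respect to the lattice Λ = ℤω₁ + ℤω₂, i.e. f(z+ω₁)=f(z), f(z+ω₂)=f(z), g(z+ω₁)=g(z), g(z+ω₂)=g(z) for all z ∈ ℂ. Then f and g are algebraically dependent: there exists a nonzero polynomial Q in two variables with complex coefficients such that Q(f(u), g(u)) = 0 for every u ∈ ℂ at which both f and g are analytic. -/

import Mathlib

/-!
Fix the lattice `Λ` and let `S` be the finitely many poles of `f` and `g` in a compact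
fundamental parallelogram, all of order at most `M`. A polynomial `Q` of degree `≤ d` in each
variable has `(d + 1)²` coefficients, while `h = Q(f, g)` has poles of order at most `2dM` at the
points of `S`. Killing all principal parts of `h` at `S` and imposing `h(z₀) = 0` at one regular
point are `|S| · 2dM + 1` linear conditions, fewer than `(d + 1)²` once `d = 2M|S| + 1`. The
resulting `h` is elliptic without poles, hence constant by Liouville, hence zero.
-/

open Filter Function Set
open scoped Topology

section PoleOrder

variable {𝕜 : Type*} [NontriviallyNormedField 𝕜] {f g : 𝕜 → 𝕜} {p : 𝕜}

lemma AnalyticAt.sub_pow_mul_of_le {m n : ℕ} (hf : AnalyticAt 𝕜 (fun z ↦ (z - p) ^ m * f z) p)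
    (hmn : m ≤ n) : AnalyticAt 𝕜 (fun z ↦ (z - p) ^ n * f z) p := by
  have : AnalyticAt 𝕜 (fun z ↦ (z - p) ^ (n - m) * ((z - p) ^ m * f z)) p := by fun_prop
  refine this.congr (Eventually.of_forall fun z ↦ ?_)
  simp only [← mul_assoc, ← pow_add, Nat.sub_add_cancel hmn]

lemma AnalyticAt.sub_pow_mul_pow_mul_pow {M N i j : ℕ}
    (hf : AnalyticAt 𝕜 (fun z ↦ (z - p) ^ M * f z) p)
    (hg : AnalyticAt 𝕜 (fun z ↦ (z - p) ^ M * g z) p) (hN : M * (i + j) ≤ N) :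
    AnalyticAt 𝕜 (fun z ↦ (z - p) ^ N * (f z ^ i * g z ^ j)) p := by
  have : AnalyticAt 𝕜 (fun z ↦ ((z - p) ^ M * f z) ^ i * ((z - p) ^ M * g z) ^ j) p := by
    fun_prop
  refine AnalyticAt.sub_pow_mul_of_le (this.congr (Eventually.of_forall fun z ↦ ?_)) hN
  simp only [mul_pow, ← pow_mul, mul_add, pow_add]
  ring

lemma Meromorphic.exists_forall_analyticAt_sub_pow_mul (hf : Meromorphic f) (S : Finset 𝕜) :
    ∃ M : ℕ, ∀ p ∈ S, ∀ n, M ≤ n → AnalyticAt 𝕜 (fun z ↦ (z - p) ^ n * f z) p := by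
  choose m hm using hf
  refine ⟨S.sup m, fun p hp n hn ↦ AnalyticAt.sub_pow_mul_of_le ?_ ((S.le_sup hp).trans hn)⟩
  simpa using hm p

lemma Meromorphic.exists_finset_forall_analyticAt {E : Type*} [NormedAddCommGroup E]
    [NormedSpace 𝕜 E] {f : 𝕜 → E} (hf : Meromorphic f) {K : Set 𝕜} (hK : IsCompact K) :
    ∃ S : Finset 𝕜, ∀ p ∈ K, p ∉ S → AnalyticAt 𝕜 f p := by
  have hfin := hK.finite_sdiff_of_mem_codiscreteWithin
    (hf.meromorphicOn (s := K)).analyticAt_mem_codiscreteWithin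
  exact ⟨hfin.toFinset, fun p hpK hpS ↦ by_contra fun hp ↦ hpS (hfin.mem_toFinset.2 ⟨hpK, hp⟩)⟩

variable [CompleteSpace 𝕜]

lemma iteratedDeriv_sum_const_mul {ι : Type*} [Fintype ι] {φ : ι → 𝕜 → 𝕜}
    (hφ : ∀ i, AnalyticAt 𝕜 (φ i) p) (c : ι → 𝕜) (k : ℕ) :
    iteratedDeriv k (fun z ↦ ∑ i, c i * φ i z) p = ∑ i, c i * iteratedDeriv k (φ i) p := by
  rw [iteratedDeriv_fun_sum (f := fun i z ↦ c i * φ i z)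
    fun i _ ↦ (analyticAt_const.mul (hφ i)).contDiffAt]
  exact Finset.sum_congr rfl fun i _ ↦ iteratedDeriv_const_mul _ (hφ i).contDiffAt

lemma meromorphicOrderAt_nonneg_of_iteratedDeriv_eq_zero [CharZero 𝕜] {h : 𝕜 → 𝕜} {N : ℕ}
    (han : AnalyticAt 𝕜 (fun z ↦ (z - p) ^ N * h z) p)
    (hderiv : ∀ k < N, iteratedDeriv k (fun z ↦ (z - p) ^ N * h z) p = 0) :
    0 ≤ meromorphicOrderAt h p := by
  have hmero : MeromorphicAt h p := ⟨N, by simpa using han⟩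
  have hvanish : (N : ℕ∞) ≤ analyticOrderAt (fun z ↦ (z - p) ^ N * h z) p :=
    (natCast_le_analyticOrderAt_iff_iteratedDeriv_eq_zero han).2 hderiv
  have horder :
      meromorphicOrderAt (fun z ↦ (z - p) ^ N * h z) p = N + meromorphicOrderAt h p := by
    rw [fun_meromorphicOrderAt_mul (by fun_prop) hmero, fun_meromorphicOrderAt_pow_id_sub_const]
  rw [han.meromorphicOrderAt_eq] at horder
  have : (N : WithTop ℤ) + 0 ≤ N + meromorphicOrderAt h p :=
    calc (N : WithTop ℤ) + 0 = ENat.map Nat.cast (N : ℕ∞) := by simp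
      _ ≤ ENat.map Nat.cast (analyticOrderAt (fun z ↦ (z - p) ^ N * h z) p) :=
        ENat.monotone_map_iff.mpr Nat.mono_cast hvanish
      _ = N + meromorphicOrderAt h p := horder
  exact (WithTop.add_le_add_iff_left WithTop.coe_ne_top).1 this

end PoleOrder

lemma Matrix.exists_ne_zero_mulVec_eq_zero_of_card_lt {K m n : Type*} [Field K] [Fintype m]
    [Fintype n] (A : Matrix m n K) (h : Fintype.card m < Fintype.card n) :
    ∃ c ≠ 0, A.mulVec c = 0 := by
  obtain ⟨c, hc, hc0⟩ := Submodule.exists_mem_ne_zero_of_ne_bot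
    (LinearMap.ker_ne_bot_of_finrank_lt (f := A.mulVecLin) (by simpa using h))
  exact ⟨c, hc0, hc⟩

lemma MvPolynomial.linearIndependent_X_zero_pow_mul_X_one_pow (R : Type*) [CommRing R] :
    LinearIndependent R fun q : ℕ × ℕ ↦ (X 0 ^ q.1 * X 1 ^ q.2 : MvPolynomial (Fin 2) R) := by
  have hinj : Injective fun q : ℕ × ℕ ↦ Finsupp.single (0 : Fin 2) q.1 + Finsupp.single 1 q.2 :=
    fun q q' h ↦
      Prod.ext (by simpa using DFunLike.congr_fun h 0) (by simpa using DFunLike.congr_fun h 1)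
  convert (basisMonomials (Fin 2) R).linearIndependent.comp _ hinj using 1
  · funext q
    rw [comp_apply, coe_basisMonomials]
    dsimp only
    rw [monomial_single_add, ← X_pow_eq_monomial]
  · rfl

namespace PeriodPair

variable (L : PeriodPair)

lemma periodic_of_mem_lattice {α : Type*} {f : ℂ → α} (h₁ : Periodic f L.ω₁)
    (h₂ : Periodic f L.ω₂) {w : ℂ} (hw : w ∈ L.lattice) : Periodic f w := by
  induction hw using Submodule.span_induction with
  | mem x hx => rcases hx with rfl | rfl <;> assumption
  | zero => exact fun z ↦ by rw [add_zero]
  | add x y _ _ hx hy => exact hx.add_period hy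
  | smul n x _ hx => exact hx.zsmul n

lemma exists_mem_parallelepiped_sub_mem_lattice (z : ℂ) :
    ∃ w ∈ parallelepiped L.basis, z - w ∈ L.lattice :=
  ⟨ZSpan.fract L.basis z,
    ZSpan.fundamentalDomain_subset_parallelepiped _ (ZSpan.fract_mem_fundamentalDomain _ z), by
      rw [ZSpan.fract_apply, sub_sub_cancel, L.lattice_eq_span_range_basis]
      exact (ZSpan.floor L.basis z).2⟩

lemma meromorphicOrderAt_nonneg_of_forall_mem_parallelepiped {h : ℂ → ℂ}
    (hper : ∀ w ∈ L.lattice, Periodic h w)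
    (hK : ∀ p ∈ parallelepiped L.basis, 0 ≤ meromorphicOrderAt h p) (z : ℂ) :
    0 ≤ meromorphicOrderAt h z := by
  obtain ⟨w, hw, hzw⟩ := L.exists_mem_parallelepiped_sub_mem_lattice z
  have htrans : h ∘ (· + (z - w)) = h := funext (hper _ hzw)
  have := hK w hw
  rwa [← htrans, meromorphicOrderAt_comp_add_const_eq_meromorphicOrderAt, add_sub_cancel] at this

theorem eq_of_analyticAt_of_meromorphicOrderAt_nonneg {h : ℂ → ℂ} (hmero : Meromorphic h)
    (hord : ∀ z, 0 ≤ meromorphicOrderAt h z) (hper : ∀ w ∈ L.lattice, Periodic h w)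
    {u v : ℂ} (hu : AnalyticAt ℂ h u) (hv : AnalyticAt ℂ h v) : h u = h v := by
  -- The values of `h` at its removable singularities are arbitrary, so Liouville's theorem is
  -- applied to its normal form `H`, which is entire.
  have hmeroOn : MeromorphicOn h univ := meromorphicOn_univ.2 hmero
  set H := toMeromorphicNFOn h univ
  have hHh (z : ℂ) : H =ᶠ[𝓝[≠] z] h := hmeroOn.toMeromorphicNFOn_eq_self_on_nhdsNE (mem_univ z)
  have hH : Differentiable ℂ H := fun z ↦ by
    have hNF := meromorphicNFOn_toMeromorphicNFOn h univ (mem_univ z)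
    refine (hNF.meromorphicOrderAt_nonneg_iff_analyticAt.1 ?_).differentiableAt
    rw [meromorphicOrderAt_toMeromorphicNFOn hmeroOn (mem_univ z)]
    exact hord z
  have hHper (z w : ℂ) (hw : w ∈ L.lattice) : H (z + w) = H z := by
    have hpunct : H ∘ (· + w) =ᶠ[𝓝[≠] z] H := by
      have := (hHh (z + w)).comp_tendsto map_add_right_nhdsNE.le
      rw [show h ∘ (· + w) = h from funext (hper w hw)] at this
      exact this.trans (hHh z).symm
    have hcont := (hH.continuous.comp (continuous_add_const w)).continuousAt (x := z)
    exact (hcont.eventuallyEq_nhds_iff_eventuallyEq_nhdsNE hH.continuous.continuousAt).1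
      hpunct |>.eq_of_nhds
  have hHeq {z : ℂ} (hz : AnalyticAt ℂ h z) : H z = h z := by
    show toMeromorphicNFOn h univ z = h z
    rw [toMeromorphicNFOn_eq_toMeromorphicNFAt hmeroOn (mem_univ z),
      toMeromorphicNFAt_eq_self.2 hz.meromorphicNFAt]
  rw [← hHeq hu, ← hHeq hv]
  exact hH.apply_eq_apply_of_bounded
    (IsZLattice.isCompact_range_of_periodic L.lattice H hH.continuous hHper).isBounded u v

theorem exists_ne_zero_forall_sum_mul_eq_zero {ι : Type*} [Fintype ι] {F : ι → ℂ → ℂ}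
    (hF : ∀ i, Meromorphic (F i)) (hper : ∀ i, ∀ w ∈ L.lattice, Periodic (F i) w)
    (S : Finset ℂ) (N : ℕ) (hS : ∀ p ∈ parallelepiped L.basis, p ∉ S → ∀ i, AnalyticAt ℂ (F i) p)
    (hN : ∀ p ∈ S, ∀ i, AnalyticAt ℂ (fun z ↦ (z - p) ^ N * F i z) p)
    (hcard : S.card * N + 1 < Fintype.card ι) :
    ∃ c : ι → ℂ, c ≠ 0 ∧ ∀ u, (∀ i, AnalyticAt ℂ (F i) u) → ∑ i, c i * F i u = 0 := by
  obtain ⟨z₀, hF₀⟩ : ∃ z₀, ∀ i, AnalyticAt ℂ (F i) z₀ :=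
    (eventually_all.2 fun i ↦ (hF i 0).eventually_analyticAt).exists
  -- Up to a factor `k!`, row `(p, k)` holds the coefficient of `(z - p) ^ (k - N)` in the
  -- Laurent expansion of `F i` at `p`, so its vanishing kills one term of the principal part.
  let A : Matrix (S × Fin N ⊕ Unit) ι ℂ := Matrix.of fun r i ↦ r.elim
    (fun pk ↦ iteratedDeriv pk.2 (fun z ↦ (z - pk.1) ^ N * F i z) pk.1) (fun _ ↦ F i z₀)
  obtain ⟨c, hc0, hc⟩ := A.exists_ne_zero_mulVec_eq_zero_of_card_lt (by simpa using hcard)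
  refine ⟨c, hc0, fun u hu ↦ ?_⟩
  set h := fun z ↦ ∑ i, c i * F i z
  have hanalytic {z : ℂ} (hz : ∀ i, AnalyticAt ℂ (F i) z) : AnalyticAt ℂ h z :=
    Finset.analyticAt_fun_sum _ fun i _ ↦ analyticAt_const.mul (hz i)
  have hhper (w : ℂ) (hw : w ∈ L.lattice) : Periodic h w := fun z ↦ by
    simp only [h, hper _ w hw z]
  have hh₀ : h z₀ = 0 := by
    simpa [h, A, Matrix.mulVec, dotProduct, mul_comm] using congrFun hc (Sum.inr ())
  have hordS (p : ℂ) (hp : p ∈ S) : 0 ≤ meromorphicOrderAt h p := by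
    have heq : (fun z ↦ (z - p) ^ N * h z) = fun z ↦ ∑ i, c i * ((z - p) ^ N * F i z) := by
      funext z
      simp only [h, Finset.mul_sum, mul_left_comm]
    refine meromorphicOrderAt_nonneg_of_iteratedDeriv_eq_zero (N := N) ?_ fun k hk ↦ ?_
    · rw [heq]
      exact Finset.analyticAt_fun_sum _ fun i _ ↦ analyticAt_const.mul (hN p hp i)
    · rw [heq, iteratedDeriv_sum_const_mul (hN p hp)]
      simpa [A, Matrix.mulVec, dotProduct, mul_comm] using congrFun hc (Sum.inl (⟨p, hp⟩, ⟨k, hk⟩))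
  have hord := L.meromorphicOrderAt_nonneg_of_forall_mem_parallelepiped hhper fun p hp ↦
    if hpS : p ∈ S then hordS p hpS else (hanalytic (hS p hp hpS)).meromorphicOrderAt_nonneg
  rw [← hh₀]
  exact L.eq_of_analyticAt_of_meromorphicOrderAt_nonneg (by fun_prop) hord hhper
    (hanalytic hu) (hanalytic hF₀)

theorem exists_ne_zero_eval_eq_zero {f g : ℂ → ℂ} (hf : Meromorphic f) (hg : Meromorphic g)
    (hfper : ∀ w ∈ L.lattice, Periodic f w) (hgper : ∀ w ∈ L.lattice, Periodic g w) :
    ∃ Q : MvPolynomial (Fin 2) ℂ, Q ≠ 0 ∧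
      ∀ u, AnalyticAt ℂ f u → AnalyticAt ℂ g u → MvPolynomial.eval ![f u, g u] Q = 0 := by
  obtain ⟨Sf, hSf⟩ := hf.exists_finset_forall_analyticAt L.basis.parallelepiped.isCompact
  obtain ⟨Sg, hSg⟩ := hg.exists_finset_forall_analyticAt L.basis.parallelepiped.isCompact
  set S := Sf ∪ Sg
  obtain ⟨Mf, hMf⟩ := hf.exists_forall_analyticAt_sub_pow_mul S
  obtain ⟨Mg, hMg⟩ := hg.exists_forall_analyticAt_sub_pow_mul S
  set M := max Mf Mg
  set d := 2 * M * S.card + 1 with hd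
  obtain ⟨c, hc0, hc⟩ := L.exists_ne_zero_forall_sum_mul_eq_zero
    (F := fun q : Fin (d + 1) × Fin (d + 1) ↦ fun z ↦ f z ^ (q.1 : ℕ) * g z ^ (q.2 : ℕ))
    (fun q ↦ by fun_prop)
    (fun q w hw z ↦ by simp only [hfper w hw z, hgper w hw z]) S (2 * d * M)
    (fun p hp hpS q ↦ by
      simp only [S, Finset.mem_union, not_or] at hpS
      exact ((hSf p hp hpS.1).pow _).mul ((hSg p hp hpS.2).pow _))
    (fun p hp q ↦ (hMf p hp M (le_max_left _ _)).sub_pow_mul_pow_mul_pow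
      (hMg p hp M (le_max_right _ _)) (by nlinarith [q.1.is_le, q.2.is_le]))
    (by simp only [Fintype.card_prod, Fintype.card_fin]; nlinarith [hd])
  refine ⟨∑ q, c q • (MvPolynomial.X 0 ^ (q.1 : ℕ) * MvPolynomial.X 1 ^ (q.2 : ℕ)),
    fun h0 ↦ hc0 ?_, fun u hfu hgu ↦ ?_⟩
  · exact funext <| Fintype.linearIndependent_iff.1
      ((MvPolynomial.linearIndependent_X_zero_pow_mul_X_one_pow ℂ).comp _
        (Fin.val_injective.prodMap Fin.val_injective)) c h0
  · simpa using hc u fun q ↦ (hfu.pow _).mul (hgu.pow _)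

end PeriodPair

/-- Weierstrass–Thimm–Siegel theorem, case n = 1 (elliptic functions):
any two meromorphic functions on ℂ, doubly periodic with respect to a
common lattice ℤω₁ + ℤω₂ (with ω₁, ω₂ linearly independent over ℝ), are
algebraically dependent. -/
theorem elliptic_two_functions_algebraically_dependent
    (ω₁ ω₂ : ℂ) (hω : LinearIndependent ℝ ![ω₁, ω₂])
    (f g : ℂ → ℂ)
    (hf : MeromorphicOn f Set.univ) (hg : MeromorphicOn g Set.univ)
    (hf₁ : ∀ z : ℂ, f (z + ω₁) = f z) (hf₂ : ∀ z : ℂ, f (z + ω₂) = f z)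
    (hg₁ : ∀ z : ℂ, g (z + ω₁) = g z) (hg₂ : ∀ z : ℂ, g (z + ω₂) = g z) :
    ∃ Q : MvPolynomial (Fin 2) ℂ, Q ≠ 0 ∧
      ∀ u : ℂ, AnalyticAt ℂ f u → AnalyticAt ℂ g u →
        MvPolynomial.eval ![f u, g u] Q = 0 := by
  let L : PeriodPair := ⟨ω₁, ω₂, hω⟩
  exact L.exists_ne_zero_eval_eq_zero (meromorphicOn_univ.1 hf) (meromorphicOn_univ.1 hg)
    (fun _ ↦ L.periodic_of_mem_lattice hf₁ hf₂) (fun _ ↦ L.periodic_of_mem_lattice hg₁ hg₂)
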